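/- arXiv:1804.05011 — 3 statements merged into one kernel-verified Lean document; each statement's English description precedes it below -/
import Mathlib

section
/- Propagation of interior Hölder estimates to an explicit gradient bound (first conclusion of Theorem 2): Let d ≥ 1, β ∈ (0,1], let k and m be real numbers with k ≥ 2+β and m ≥ 1, let 𝔧 ≥ 1 be a real number, and let Γ₀ > 0. Set δ := m/(k+2). Then there exists Γ > 0, depending only on d, β, k, m, 𝔧, Γ₀, such that the following holds for every α ∈ (0,1): if V̂, R, H : ℝ^d → ℝ satisfy, with ρ(x) := (1+‖x‖) + (1−α)^{−δ} + 2𝔧, (i) |V̂(y)| ≤ Γ₀((1−α)^{−m} + ‖y‖^k/(1−α)) for all y ∈ ℝ^d; (ii) 0 ≤ R(y) ≤ Γ₀(1 + ‖y‖^{k−β}) for all y ∈ ℝ^d; (iii) 0 ≤ H(x) ≤ Γ₀( (sup_{‖y−x‖ ≤ ρ(x)} |V̂(y)|) / ((1+‖x‖) + (1−α)^{−δ})^{2+β} + sup_{‖y−x‖ ≤ ρ(x)} R(y) ) for all x ∈ ℝ^d; then for every x ∈ ℝ^d, H(x) ≤ Γ( (1+‖x‖)^{k−β} + (1−α)^{−m(k−β)/(k+2)}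 + (1−α)^{−(k−β)/2} ). -/
noncomputable section

private lemma add_rpow_le (a b e : ℝ) (ha : 0 ≤ a) (hb : 0 ≤ b) (he : 0 ≤ e) :
    (a + b) ^ e ≤ (2 * a) ^ e + (2 * b) ^ e := by
  rcases le_total a b with h | h
  · calc (a + b) ^ e ≤ (2 * b) ^ e :=
        Real.rpow_le_rpow (by linarith) (by linarith) he
      _ ≤ _ := le_add_of_nonneg_left (Real.rpow_nonneg (by linarith) e)
  · calc (a + b) ^ e ≤ (2 * a) ^ e :=
        Real.rpow_le_rpow (by linarith) (by linarith) he
      _ ≤ _ := le_add_of_nonneg_right (Real.rpow_nonneg (by linarith) e)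

set_option maxHeartbeats 1000000 in
theorem schauder_estimate_propagation
    (d : ℕ) (hd : 1 ≤ d) (β k m jmp Γ₀ : ℝ)
    (hβ0 : 0 < β) (hβ1 : β ≤ 1) (hk : 2 + β ≤ k) (hm : 1 ≤ m)
    (hjmp : 1 ≤ jmp) (hΓ₀ : 0 < Γ₀) (δ : ℝ) (hδ : δ = m / (k + 2)) :
    ∃ Γ : ℝ, 0 < Γ ∧
      ∀ α : ℝ, 0 < α → α < 1 →
      ∀ Vh R H : EuclideanSpace ℝ (Fin d) → ℝ,
      ∀ ρ : EuclideanSpace ℝ (Fin d) → ℝ,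
      (∀ x, ρ x = (1 + ‖x‖) + (1 - α) ^ (-δ) + 2 * jmp) →
      (∀ y, |Vh y| ≤ Γ₀ * ((1 - α) ^ (-m) + ‖y‖ ^ k / (1 - α))) →
      (∀ y, 0 ≤ R y ∧ R y ≤ Γ₀ * (1 + ‖y‖ ^ (k - β))) →
      (∀ x, 0 ≤ H x ∧ H x ≤ Γ₀ *
          ((⨆ y : Metric.closedBall x (ρ x), |Vh (y : EuclideanSpace ℝ (Fin d))|) /
              ((1 + ‖x‖) + (1 - α) ^ (-δ)) ^ (2 + β) +
            ⨆ y : Metric.closedBall x (ρ x), R (y : EuclideanSpace ℝ (Fin d)))) →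
      ∀ x, H x ≤ Γ * ((1 + ‖x‖) ^ (k - β) +
          (1 - α) ^ (-(m * (k - β) / (k + 2))) + (1 - α) ^ (-((k - β) / 2))) := by
  set C : ℝ := 2 + 2 * jmp with hC
  have hC1 : (1:ℝ) ≤ C := by simp only [hC]; linarith
  have hC0 : (0:ℝ) < C := by linarith
  have hk0 : (0:ℝ) < k := by linarith
  have hk2 : (0:ℝ) < k + 2 := by linarith
  have hkβ : (0:ℝ) < k - β := by linarith
  have he0 : (0:ℝ) ≤ k - (2 + β) := by linarith
  have hδ0 : 0 < δ := by rw [hδ]; positivity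
  refine ⟨Γ₀ ^ 2 * (2 + 2 ^ (k + 1) * C ^ k + (2 * C) ^ k), by positivity, ?_⟩
  intro α hα0 hα1 Vh R H ρ hρ hVh hR hH x
  set ε : ℝ := 1 - α with hεdef
  have hε0 : 0 < ε := by simp only [hεdef]; linarith
  have hε1 : ε ≤ 1 := by simp only [hεdef]; linarith
  set A : ℝ := 1 + ‖x‖ with hA
  have hA1 : (1:ℝ) ≤ A := by simp only [hA]; linarith [norm_nonneg x]
  have hA0 : (0:ℝ) < A := by linarith
  set B : ℝ := ε ^ (-δ) with hB
  have hB1 : (1:ℝ) ≤ B :=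
    Real.one_le_rpow_of_pos_of_le_one_of_nonpos hε0 hε1 (by linarith)
  have hB0 : (0:ℝ) < B := by linarith
  have hAB0 : (0:ℝ) < A + B := by linarith
  set T : ℝ := A ^ (k - β) + ε ^ (-(m * (k - β) / (k + 2))) + ε ^ (-((k - β) / 2)) with hT
  have hT1 : (1:ℝ) ≤ T := by
    have h1 : (1:ℝ) ≤ A ^ (k - β) := Real.one_le_rpow hA1 (by linarith)
    have h2 : (0:ℝ) ≤ ε ^ (-(m * (k - β) / (k + 2))) := Real.rpow_nonneg hε0.le _
    have h3 : (0:ℝ) ≤ ε ^ (-((k - β) / 2)) := Real.rpow_nonneg hε0.le _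
    simp only [hT]; linarith
  have hT0 : (0:ℝ) < T := by linarith
  have hρx : ρ x = A + B + 2 * jmp := by rw [hρ x, ← hA]
  have hρpos : 0 < ρ x := by rw [hρx]; linarith
  have hne : Nonempty (Metric.closedBall x (ρ x)) :=
    ⟨⟨x, Metric.mem_closedBall_self hρpos.le⟩⟩
  have hnorm : ∀ y : EuclideanSpace ℝ (Fin d), y ∈ Metric.closedBall x (ρ x) →
      ‖y‖ ≤ C * (A + B) := by
    intro y hy
    have h1 : ‖y‖ ≤ ‖x‖ + dist y x := by
      have := norm_sub_norm_le y x
      rw [← dist_eq_norm] at this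
      linarith
    have h2 : dist y x ≤ ρ x := Metric.mem_closedBall.mp hy
    have h3 : ‖y‖ ≤ ‖x‖ + (A + B + 2 * jmp) := by rw [← hρx]; linarith
    have hx : ‖x‖ = A - 1 := by simp only [hA]; ring
    rw [hx] at h3
    nlinarith [mul_le_mul_of_nonneg_left hB1 (by linarith : (0:ℝ) ≤ 2 * jmp)]
  -- bound the sup of |Vh|
  have hS1 : (⨆ y : Metric.closedBall x (ρ x), |Vh (y : EuclideanSpace ℝ (Fin d))|) ≤
      Γ₀ * (ε ^ (-m) + (C * (A + B)) ^ k / ε) := by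
    apply ciSup_le
    intro y
    refine le_trans (hVh y) ?_
    have h1 : ‖(y : EuclideanSpace ℝ (Fin d))‖ ^ k ≤ (C * (A + B)) ^ k :=
      Real.rpow_le_rpow (norm_nonneg _) (hnorm y y.2) hk0.le
    have h2 : ‖(y : EuclideanSpace ℝ (Fin d))‖ ^ k / ε ≤ (C * (A + B)) ^ k / ε := by
      gcongr
    nlinarith [hΓ₀.le]
  -- bound the sup of R
  have hS2 : (⨆ y : Metric.closedBall x (ρ x), R (y : EuclideanSpace ℝ (Fin d))) ≤
      Γ₀ * (1 + (C * (A + B)) ^ (k - β)) := by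
    apply ciSup_le
    intro y
    refine le_trans (hR y).2 ?_
    have h1 : ‖(y : EuclideanSpace ℝ (Fin d))‖ ^ (k - β) ≤ (C * (A + B)) ^ (k - β) :=
      Real.rpow_le_rpow (norm_nonneg _) (hnorm y y.2) hkβ.le
    nlinarith [hΓ₀.le]
  set D : ℝ := (A + B) ^ (2 + β) with hD
  have hD0 : 0 < D := Real.rpow_pos_of_pos hAB0 _
  have hDB : B ^ (2 + β) ≤ D :=
    Real.rpow_le_rpow hB0.le (by linarith) (by linarith)
  have hB2β : B ^ (2 + β) = ε ^ (-(δ * (2 + β))) := by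
    rw [hB, ← Real.rpow_mul hε0.le]; ring_nf
  -- key estimate 1
  have key1 : ε ^ (-m) / D ≤ ε ^ (-(m * (k - β) / (k + 2))) := by
    have h1 : ε ^ (-m) / D ≤ ε ^ (-m) / B ^ (2 + β) :=
      div_le_div_of_nonneg_left (Real.rpow_nonneg hε0.le _)
        (by rw [hB2β]; exact Real.rpow_pos_of_pos hε0 _) hDB
    have h2 : ε ^ (-m) / B ^ (2 + β) = ε ^ (-m - (-(δ * (2 + β)))) := by
      rw [hB2β, ← Real.rpow_sub hε0]
    have h3 : -m - (-(δ * (2 + β))) = -(m * (k - β) / (k + 2)) := by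
      rw [hδ]; field_simp; ring
    rw [h2, h3] at h1
    exact h1
  have hABk : (A + B) ^ k / D = (A + B) ^ (k - (2 + β)) := by
    rw [hD, ← Real.rpow_sub hAB0]
  set e : ℝ := k - (2 + β) with he
  -- A part
  have keyA : A ^ e * ε ^ (-(1:ℝ)) ≤ A ^ (k - β) + ε ^ (-((k - β) / 2)) := by
    rcases le_total (ε ^ (-(1:ℝ))) (A ^ (2:ℝ)) with h | h
    · have h1 : A ^ e * ε ^ (-(1:ℝ)) ≤ A ^ e * A ^ (2:ℝ) :=
        mul_le_mul_of_nonneg_left h (Real.rpow_nonneg hA0.le _)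
      have h2 : A ^ e * A ^ (2:ℝ) = A ^ (k - β) := by
        rw [← Real.rpow_add hA0]; congr 1; simp only [he]; ring
      rw [h2] at h1
      exact le_trans h1 (le_add_of_nonneg_right (Real.rpow_nonneg hε0.le _))
    · have hA' : A ≤ ε ^ (-(1/2 : ℝ)) := by
        have := Real.rpow_le_rpow (Real.rpow_nonneg hA0.le _) h (by norm_num : (0:ℝ) ≤ 1/2)
        rwa [← Real.rpow_mul hA0.le, ← Real.rpow_mul hε0.le,
          show (2:ℝ) * (1/2) = 1 by norm_num, Real.rpow_one,
          show (-(1:ℝ)) * (1/2) = -(1/2 : ℝ) by norm_num] at this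
      have h1 : A ^ e ≤ ε ^ (-(1/2:ℝ) * e) := by
        rw [Real.rpow_mul hε0.le]
        exact Real.rpow_le_rpow hA0.le hA' he0
      have h3 : A ^ e * ε ^ (-(1:ℝ)) ≤ ε ^ (-(1/2:ℝ) * e) * ε ^ (-(1:ℝ)) :=
        mul_le_mul_of_nonneg_right h1 (Real.rpow_nonneg hε0.le _)
      have h4 : ε ^ (-(1/2:ℝ) * e) * ε ^ (-(1:ℝ)) = ε ^ (-((k - β) / 2)) := by
        rw [← Real.rpow_add hε0]; congr 1; simp only [he]; ring
      rw [h4] at h3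
      exact le_trans h3 (le_add_of_nonneg_left (Real.rpow_nonneg hA0.le _))
  -- B part
  have keyB : B ^ e * ε ^ (-(1:ℝ)) ≤
      ε ^ (-(m * (k - β) / (k + 2))) + ε ^ (-((k - β) / 2)) := by
    have hBe : B ^ e * ε ^ (-(1:ℝ)) = ε ^ (-(δ * e) + -(1:ℝ)) := by
      rw [hB, ← Real.rpow_mul hε0.le, ← Real.rpow_add hε0]; ring_nf
    rw [hBe]
    rcases le_total m ((k + 2) / 2) with hcase | hcase
    · have h2 : m / (k + 2) ≤ 1 / 2 := by
        rw [div_le_div_iff₀ hk2 (by norm_num : (0:ℝ) < 2)]; linarith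
      have hq : m / (k + 2) * (k - (2 + β)) + 1 ≤ (k - β) / 2 := by
        have := mul_le_mul_of_nonneg_right h2 he0
        linarith
      have hex : -((k - β) / 2) ≤ -(δ * e) + -(1:ℝ) := by
        rw [hδ]; simp only [he]; linarith
      have := Real.rpow_le_rpow_of_exponent_ge hε0 hε1 hex
      exact le_trans this (le_add_of_nonneg_left (Real.rpow_nonneg hε0.le _))
    · have h2 : (1:ℝ) ≤ 2 * m / (k + 2) := by
        rw [le_div_iff₀ hk2]; linarith
      have hq : m / (k + 2) * (k - (2 + β)) + 2 * m / (k + 2) = m * (k - β) / (k + 2) := by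
        field_simp; ring
      have hex : -(m * (k - β) / (k + 2)) ≤ -(δ * e) + -(1:ℝ) := by
        rw [hδ]; simp only [he]; linarith
      have := Real.rpow_le_rpow_of_exponent_ge hε0 hε1 hex
      exact le_trans this (le_add_of_nonneg_right (Real.rpow_nonneg hε0.le _))
  have hsplit : (A + B) ^ e ≤ 2 ^ e * (A ^ e + B ^ e) := by
    have h := add_rpow_le A B e hA0.le hB0.le he0
    rw [Real.mul_rpow (by norm_num) hA0.le, Real.mul_rpow (by norm_num) hB0.le] at h
    linarith
  -- key estimate 2
  have key2 : (C * (A + B)) ^ k / ε / D ≤ 2 ^ (k + 1) * C ^ k * T := by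
    have hmr : (C * (A + B)) ^ k = C ^ k * (A + B) ^ k :=
      Real.mul_rpow hC0.le hAB0.le
    have step : (C * (A + B)) ^ k / ε / D = C ^ k * ((A + B) ^ e * ε ^ (-(1:ℝ))) := by
      rw [hmr, he, ← hABk, Real.rpow_neg hε0.le, Real.rpow_one]
      field_simp
    rw [step]
    have h1 : (A + B) ^ e * ε ^ (-(1:ℝ)) ≤
        2 ^ e * (A ^ e * ε ^ (-(1:ℝ)) + B ^ e * ε ^ (-(1:ℝ))) := by
      have h := mul_le_mul_of_nonneg_right hsplit (Real.rpow_nonneg hε0.le (-(1:ℝ)))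
      calc (A + B) ^ e * ε ^ (-(1:ℝ)) ≤ 2 ^ e * (A ^ e + B ^ e) * ε ^ (-(1:ℝ)) := h
        _ = 2 ^ e * (A ^ e * ε ^ (-(1:ℝ)) + B ^ e * ε ^ (-(1:ℝ))) := by ring
    have h2 : A ^ e * ε ^ (-(1:ℝ)) + B ^ e * ε ^ (-(1:ℝ)) ≤ 2 * T := by
      have h3 : (0:ℝ) ≤ ε ^ (-((k - β) / 2)) := Real.rpow_nonneg hε0.le _
      have h4 : (1:ℝ) ≤ A ^ (k - β) := Real.one_le_rpow hA1 (by linarith)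
      have h5 : (0:ℝ) ≤ ε ^ (-(m * (k - β) / (k + 2))) := Real.rpow_nonneg hε0.le _
      simp only [hT]; linarith [keyA, keyB]
    have h2e : (2:ℝ) ^ e ≤ 2 ^ k :=
      Real.rpow_le_rpow_of_exponent_le (by norm_num) (by simp only [he]; linarith)
    have hCk0 : (0:ℝ) ≤ C ^ k := Real.rpow_nonneg hC0.le _
    have h2k1 : (2:ℝ) ^ k * 2 = 2 ^ (k + 1) := by
      rw [Real.rpow_add (by norm_num : (0:ℝ) < 2), Real.rpow_one]
    calc C ^ k * ((A + B) ^ e * ε ^ (-(1:ℝ)))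
        ≤ C ^ k * (2 ^ e * (2 * T)) := by
          apply mul_le_mul_of_nonneg_left _ hCk0
          calc (A + B) ^ e * ε ^ (-(1:ℝ))
              ≤ 2 ^ e * (A ^ e * ε ^ (-(1:ℝ)) + B ^ e * ε ^ (-(1:ℝ))) := h1
            _ ≤ 2 ^ e * (2 * T) :=
                mul_le_mul_of_nonneg_left h2 (Real.rpow_nonneg (by norm_num) e)
      _ ≤ C ^ k * (2 ^ k * (2 * T)) := by
          apply mul_le_mul_of_nonneg_left _ hCk0
          exact mul_le_mul_of_nonneg_right h2e (by linarith)
      _ = 2 ^ (k + 1) * C ^ k * T := by rw [← h2k1]; ring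
  -- key estimate 3
  have key3 : 1 + (C * (A + B)) ^ (k - β) ≤ (1 + (2 * C) ^ k) * T := by
    have hmr : (C * (A + B)) ^ (k - β) = C ^ (k - β) * (A + B) ^ (k - β) :=
      Real.mul_rpow hC0.le hAB0.le
    have hsp : (A + B) ^ (k - β) ≤ 2 ^ (k - β) * (A ^ (k - β) + B ^ (k - β)) := by
      have h := add_rpow_le A B (k - β) hA0.le hB0.le hkβ.le
      rw [Real.mul_rpow (by norm_num) hA0.le, Real.mul_rpow (by norm_num) hB0.le] at h
      linarith
    have hBkβ : B ^ (k - β) = ε ^ (-(m * (k - β) / (k + 2))) := by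
      rw [hB, ← Real.rpow_mul hε0.le, hδ]; congr 1; field_simp
    have hsum : A ^ (k - β) + B ^ (k - β) ≤ T := by
      rw [hBkβ]
      have h3 : (0:ℝ) ≤ ε ^ (-((k - β) / 2)) := Real.rpow_nonneg hε0.le _
      simp only [hT]; linarith
    have h2C : C ^ (k - β) * 2 ^ (k - β) = (2 * C) ^ (k - β) := by
      rw [Real.mul_rpow (by norm_num) hC0.le]; ring
    have h2Ck : (2 * C) ^ (k - β) ≤ (2 * C) ^ k :=
      Real.rpow_le_rpow_of_exponent_le (by linarith) (by linarith)
    have hCnn : (0:ℝ) ≤ C ^ (k - β) := Real.rpow_nonneg hC0.le _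
    have h2Cnn : (0:ℝ) ≤ (2 * C) ^ (k - β) := Real.rpow_nonneg (by linarith) _
    calc 1 + (C * (A + B)) ^ (k - β)
        ≤ 1 * T + C ^ (k - β) * (2 ^ (k - β) * (A ^ (k - β) + B ^ (k - β))) := by
          rw [hmr, one_mul]
          have := mul_le_mul_of_nonneg_left hsp hCnn
          linarith
      _ = 1 * T + (2 * C) ^ (k - β) * (A ^ (k - β) + B ^ (k - β)) := by
          rw [← h2C]; ring
      _ ≤ 1 * T + (2 * C) ^ (k - β) * T := by
          have := mul_le_mul_of_nonneg_left hsum h2Cnn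
          linarith
      _ ≤ 1 * T + (2 * C) ^ k * T := by
          have := mul_le_mul_of_nonneg_right h2Ck hT0.le
          linarith
      _ = (1 + (2 * C) ^ k) * T := by ring
  -- assembly
  obtain ⟨hH0, hHx⟩ := hH x
  rw [← hA, ← hD] at hHx
  have hS1nn : (0:ℝ) ≤ ⨆ y : Metric.closedBall x (ρ x), |Vh (y : EuclideanSpace ℝ (Fin d))| :=
    le_ciSup_of_le (by
      refine ⟨Γ₀ * (ε ^ (-m) + (C * (A + B)) ^ k / ε), ?_⟩
      rintro _ ⟨y, rfl⟩
      refine le_trans (hVh y) ?_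
      have h1 : ‖(y : EuclideanSpace ℝ (Fin d))‖ ^ k ≤ (C * (A + B)) ^ k :=
        Real.rpow_le_rpow (norm_nonneg _) (hnorm y y.2) hk0.le
      have h2 : ‖(y : EuclideanSpace ℝ (Fin d))‖ ^ k / ε ≤ (C * (A + B)) ^ k / ε := by
        gcongr
      nlinarith [hΓ₀.le]) hne.some (abs_nonneg _)
  have hSup1 : (⨆ y : Metric.closedBall x (ρ x), |Vh (y : EuclideanSpace ℝ (Fin d))|) / D ≤
      Γ₀ * (1 + 2 ^ (k + 1) * C ^ k) * T := by
    have h1 : (⨆ y : Metric.closedBall x (ρ x), |Vh (y : EuclideanSpace ℝ (Fin d))|) / D ≤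
        Γ₀ * (ε ^ (-m) + (C * (A + B)) ^ k / ε) / D := by gcongr
    have h2 : Γ₀ * (ε ^ (-m) + (C * (A + B)) ^ k / ε) / D =
        Γ₀ * (ε ^ (-m) / D + (C * (A + B)) ^ k / ε / D) := by
      field_simp
    have hεm : ε ^ (-(m * (k - β) / (k + 2))) ≤ T := by
      have h3 : (0:ℝ) ≤ ε ^ (-((k - β) / 2)) := Real.rpow_nonneg hε0.le _
      have h4 : (0:ℝ) ≤ A ^ (k - β) := Real.rpow_nonneg hA0.le _
      simp only [hT]; linarith
    have h5 : ε ^ (-m) / D + (C * (A + B)) ^ k / ε / D ≤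
        T + 2 ^ (k + 1) * C ^ k * T := by
      linarith [key1, key2, hεm]
    calc (⨆ y : Metric.closedBall x (ρ x), |Vh (y : EuclideanSpace ℝ (Fin d))|) / D
        ≤ Γ₀ * (ε ^ (-m) / D + (C * (A + B)) ^ k / ε / D) := by rw [← h2]; exact h1
      _ ≤ Γ₀ * (T + 2 ^ (k + 1) * C ^ k * T) := mul_le_mul_of_nonneg_left h5 hΓ₀.le
      _ = Γ₀ * (1 + 2 ^ (k + 1) * C ^ k) * T := by ring
  have hSup2 : (⨆ y : Metric.closedBall x (ρ x), R (y : EuclideanSpace ℝ (Fin d))) ≤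
      Γ₀ * (1 + (2 * C) ^ k) * T := by
    calc (⨆ y : Metric.closedBall x (ρ x), R (y : EuclideanSpace ℝ (Fin d)))
        ≤ Γ₀ * (1 + (C * (A + B)) ^ (k - β)) := hS2
      _ ≤ Γ₀ * ((1 + (2 * C) ^ k) * T) := mul_le_mul_of_nonneg_left key3 hΓ₀.le
      _ = Γ₀ * (1 + (2 * C) ^ k) * T := by ring
  calc H x ≤ Γ₀ * ((⨆ y : Metric.closedBall x (ρ x), |Vh (y : EuclideanSpace ℝ (Fin d))|) / D +
        ⨆ y : Metric.closedBall x (ρ x), R (y : EuclideanSpace ℝ (Fin d))) := hHx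
    _ ≤ Γ₀ * (Γ₀ * (1 + 2 ^ (k + 1) * C ^ k) * T + Γ₀ * (1 + (2 * C) ^ k) * T) := by
        apply mul_le_mul_of_nonneg_left _ hΓ₀.le
        exact add_le_add hSup1 hSup2
    _ = Γ₀ ^ 2 * (2 + 2 ^ (k + 1) * C ^ k + (2 * C) ^ k) * T := by ring
end
end

section
/- Validity and Bellman-equation form of the one-dimensional Kushner–Dupuis chain (Example 4): Let α ∈ (0,1) and h > 0, let 𝒰 be a nonempty countable set, and let r, μ, σ² : 𝒰 → ℝ satisfy σ²(u) > 0 and σ²(u) ≥ |μ(u)|·h for every u ∈ 𝒰, with Σ := sup_{u∈𝒰} σ²(u) finite and positive. Define α_h := (1 + (h²/Σ)(1/α − 1))^{−1}, p₊(u) := (μ(u)h + σ²(u))/(2Σ), p₋(u) := (−μ(u)h + σ²(u))/(2Σ), p₀(u) := 1 − p₊(u) − p₋(u), and r̃(u) := α_h h² r(u)/(α Σ). Then: (a) for every u, p₊(u), p₋(u), p₀(u) ∈ [0,1] and p₊(u) + p₋(u) + p₀(u) = 1; (b) α_h ∈ (0,1); (c) for any real numbers V₋, V₀, V₊ such that the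 set { r(u) + α( μ(u)(V₊ − V₋)/(2h) + σ²(u)(V₊ − 2V₀ + V₋)/(2h²) ) : u ∈ 𝒰 } is bounded above, the central-difference discretized equation (1−α)·V₀ = sup_{u∈𝒰} { r(u) + α( μ(u)(V₊ − V₋)/(2h) + σ²(u)(V₊ − 2V₀ + V₋)/(2h²) ) } holds if and only if V₀ = sup_{u∈𝒰} { r̃(u) + α_h( p₊(u)·V₊ + p₋(u)·V₋ + p₀(u)·V₀ ) }. -/
/-!
With `c = α_h h² / (α Σ) > 0`, the chain's one-step value `r̃ + α_h (p₊ V₊ + p₋ V₋ + p₀ V₀)`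
equals `c · H + α_h V₀` for each action, where `H = r + α (μ δV + σ² δ²V)` is the
central-difference Hamiltonian, and `1 - α_h = c (1 - α)`. A monotone affine map commutes with
the supremum, so `V₀ = c · sup H + α_h V₀` is the equation `(1 - α) V₀ = sup H` multiplied by `c`.
-/

open Set

lemma ciSup_mul_add {ι : Sort*} [Nonempty ι] {f : ι → ℝ} (hf : BddAbove (range f))
    {c : ℝ} (hc : 0 ≤ c) (d : ℝ) : ⨆ i, (c * f i + d) = c * (⨆ i, f i) + d :=
  (Monotone.map_ciSup_of_continuousAt (f := fun x => c * x + d) (by fun_prop)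
    (fun _ _ hxy => by dsimp only; gcongr) hf).symm

lemma add_div_two_mul_mem_Icc {m s S : ℝ} (hm : |m| ≤ s) (hs : s ≤ S) :
    (m + s) / (2 * S) ∈ Icc (0 : ℝ) 1 := by
  have hm₁ := neg_abs_le m
  have hm₂ := le_abs_self m
  have hs₀ : 0 ≤ s := (abs_nonneg m).trans hm
  exact ⟨div_nonneg (by linarith) (by linarith), div_le_one_of_le₀ (by linarith) (by linarith)⟩

lemma nearest_neighbour_probs_mem_Icc {m s S pUp pDown pStay : ℝ} (hm : |m| ≤ s) (hs : s ≤ S)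
    (hpUp : pUp = (m + s) / (2 * S)) (hpDown : pDown = (-m + s) / (2 * S))
    (hpStay : pStay = 1 - pUp - pDown) :
    pUp ∈ Icc (0 : ℝ) 1 ∧ pDown ∈ Icc (0 : ℝ) 1 ∧ pStay ∈ Icc (0 : ℝ) 1 ∧
      pUp + pDown + pStay = 1 := by
  have hs₀ : 0 ≤ s := (abs_nonneg m).trans hm
  have hpStay' : pStay = 1 - s / S := by rw [hpStay, hpUp, hpDown]; ring
  have hsS : s / S ∈ Icc (0 : ℝ) 1 :=
    ⟨div_nonneg hs₀ (hs₀.trans hs), div_le_one_of_le₀ hs (hs₀.trans hs)⟩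
  refine ⟨hpUp ▸ add_div_two_mul_mem_Icc hm hs,
    hpDown ▸ add_div_two_mul_mem_Icc ((abs_neg m).symm ▸ hm) hs, ?_, by rw [hpStay]; ring⟩
  rw [hpStay']
  exact ⟨by linarith [hsS.2], by linarith [hsS.1]⟩

lemma one_sub_mul_eq_iff_eq_mul_add {α β c x S : ℝ} (hc : c ≠ 0)
    (hβ : 1 - β = c * (1 - α)) : (1 - α) * x = S ↔ x = c * S + β * x := by
  rw [← mul_right_inj' hc]
  exact ⟨fun H => by linear_combination x * hβ + H, fun H => by linear_combination H - x * hβ⟩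

theorem kushner_dupuis_chain_one_dim_general
    (α h : ℝ) (hα0 : 0 < α) (hα1 : α < 1) (hh : 0 < h)
    (A : Type) [Nonempty A]
    (r μ σ2 : A → ℝ)
    (hsmalldrift : ∀ u, |μ u| * h ≤ σ2 u)
    (Sb : ℝ) (hSb : IsLUB (Set.range σ2) Sb) (hSbpos : 0 < Sb)
    (αh : ℝ) (hαh : αh = (1 + h ^ 2 / Sb * (1 / α - 1))⁻¹)
    (pp pm p0 : A → ℝ)
    (hpp : ∀ u, pp u = (μ u * h + σ2 u) / (2 * Sb))
    (hpm : ∀ u, pm u = (-(μ u) * h + σ2 u) / (2 * Sb))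
    (hp0 : ∀ u, p0 u = 1 - pp u - pm u)
    (rt : A → ℝ) (hrt : ∀ u, rt u = αh * h ^ 2 * r u / (α * Sb)) :
    (∀ u, pp u ∈ Set.Icc (0 : ℝ) 1 ∧ pm u ∈ Set.Icc (0 : ℝ) 1 ∧
      p0 u ∈ Set.Icc (0 : ℝ) 1 ∧ pp u + pm u + p0 u = 1) ∧
    (0 < αh ∧ αh < 1) ∧
    (∀ Vm V0 Vp : ℝ,
      BddAbove (Set.range fun u : A =>
        r u + α * (μ u * (Vp - Vm) / (2 * h) + σ2 u * (Vp - 2 * V0 + Vm) / (2 * h ^ 2))) →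
      ((1 - α) * V0 = ⨆ u : A, (r u + α * (μ u * (Vp - Vm) / (2 * h) +
          σ2 u * (Vp - 2 * V0 + Vm) / (2 * h ^ 2))) ↔
        V0 = ⨆ u : A, (rt u + αh * (pp u * Vp + pm u * Vm + p0 u * V0)))) := by
  have hdrift : ∀ u, |μ u * h| ≤ σ2 u := fun u => by
    rw [abs_mul, abs_of_pos hh]; exact hsmalldrift u
  have hstep : 0 < h ^ 2 / Sb * (1 / α - 1) := by
    have : 1 < 1 / α := by rw [lt_div_iff₀ hα0]; linarith
    exact mul_pos (by positivity) (by linarith)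
  have hαh0 : 0 < αh := by rw [hαh]; positivity
  refine ⟨fun u => nearest_neighbour_probs_mem_Icc (hdrift u) (hSb.1 ⟨u, rfl⟩) (hpp u)
      (by rw [hpm u, neg_mul]) (hp0 u),
    ⟨hαh0, by rw [hαh]; exact inv_lt_one_of_one_lt₀ (by linarith)⟩, ?_⟩
  intro Vm V0 Vp hbdd
  have hα : α ≠ 0 := hα0.ne'
  have hh' : h ≠ 0 := hh.ne'
  have hSb' : Sb ≠ 0 := hSbpos.ne'
  set c := αh * h ^ 2 / (α * Sb) with hc
  have hchain : ∀ u, rt u + αh * (pp u * Vp + pm u * Vm + p0 u * V0) =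
      c * (r u + α * (μ u * (Vp - Vm) / (2 * h) + σ2 u * (Vp - 2 * V0 + Vm) / (2 * h ^ 2)))
        + αh * V0 := fun u => by
    rw [hc, hrt u, hp0 u, hpp u, hpm u]; field_simp; ring
  have hdiscount : 1 - αh = c * (1 - α) := by
    have : αh * (1 + h ^ 2 / Sb * (1 / α - 1)) = 1 := by rw [hαh, inv_mul_cancel₀ (by linarith)]
    calc 1 - αh = αh * (h ^ 2 / Sb * (1 / α - 1)) := by linear_combination -this
      _ = c * (1 - α) := by rw [hc]; field_simp
  simp_rw [hchain]
  rw [ciSup_mul_add hbdd (by positivity)]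
  exact one_sub_mul_eq_iff_eq_mul_add (by positivity) hdiscount

theorem kushner_dupuis_chain_one_dim
    (α h : ℝ) (hα0 : 0 < α) (hα1 : α < 1) (hh : 0 < h)
    (A : Type) [Countable A] [Nonempty A]
    (r μ σ2 : A → ℝ)
    (hσpos : ∀ u, 0 < σ2 u)
    (hsmalldrift : ∀ u, |μ u| * h ≤ σ2 u)
    (Sb : ℝ) (hSb : IsLUB (Set.range σ2) Sb) (hSbpos : 0 < Sb)
    (αh : ℝ) (hαh : αh = (1 + h ^ 2 / Sb * (1 / α - 1))⁻¹)
    (pp pm p0 : A → ℝ)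
    (hpp : ∀ u, pp u = (μ u * h + σ2 u) / (2 * Sb))
    (hpm : ∀ u, pm u = (-(μ u) * h + σ2 u) / (2 * Sb))
    (hp0 : ∀ u, p0 u = 1 - pp u - pm u)
    (rt : A → ℝ) (hrt : ∀ u, rt u = αh * h ^ 2 * r u / (α * Sb)) :
    (∀ u, pp u ∈ Set.Icc (0 : ℝ) 1 ∧ pm u ∈ Set.Icc (0 : ℝ) 1 ∧
      p0 u ∈ Set.Icc (0 : ℝ) 1 ∧ pp u + pm u + p0 u = 1) ∧
    (0 < αh ∧ αh < 1) ∧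
    (∀ Vm V0 Vp : ℝ,
      BddAbove (Set.range fun u : A =>
        r u + α * (μ u * (Vp - Vm) / (2 * h) + σ2 u * (Vp - 2 * V0 + Vm) / (2 * h ^ 2))) →
      ((1 - α) * V0 = ⨆ u : A, (r u + α * (μ u * (Vp - Vm) / (2 * h) +
          σ2 u * (Vp - 2 * V0 + Vm) / (2 * h ^ 2))) ↔
        V0 = ⨆ u : A, (rt u + αh * (pp u * Vp + pm u * Vm + p0 u * V0)))) :=
  kushner_dupuis_chain_one_dim_general α h hα0 hα1 hh A r μ σ2 hsmalldrift Sb hSb hSbpos αh hαh pp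
    pm p0 hpp hpm hp0 rt hrt
end

section
/- Vanishing-discount optimality in pathwise form (Corollary 1): Let d ≥ 1, β ∈ (0,1], let k ≥ max(1,β) and m with 1 ≤ m ≤ k+1 be real numbers, let 𝔧 ≥ 1 be a real number, and let Γ₀ > 0. There exists Γ > 0, depending only on d, β, k, m, 𝔧, Γ₀, such that for every α ∈ [1/2, 1), every x ∈ ℝ^d with ‖x‖ ≥ 1/(1−α), every sequence (x_t)_{t≥0} in ℝ^d with x₀ = x and ‖x_{t+1} − x_t‖ ≤ 𝔧 for all t, and every function H : ℝ^d → ℝ satisfying 0 ≤ H(y) ≤ Γ₀( (1+‖y‖)^{k−β} + (1−α)^{−m(k−β)/(k+2)} + (1−α)^{−(k−β)/2} ) for all y ∈ ℝ^d, one has Σ_{t=0}^∞ α^t H(x_t) ≤ Γ (1−α)^β Σ_{t=0}^∞ α^t ‖x_t‖^k. -/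
/-!
Write `ε = 1 - α`. Rescaling by `ε` gives `u ^ (k - β) ≤ ε ^ β u ^ k + ε ^ (β - k)`, so
`H y ≤ C (ε ^ β ‖y‖ ^ k + ε ^ (β - k))`. The first part sums to `C ε ^ β` times the discounted
`k`-th moment `S`, the constant part to `C ε ^ (β - k - 1)`. Since the trajectory moves by at most
`𝔧` per step and starts at distance `≥ 1 / ε`, it stays at distance `≥ 1 / (2ε)` for about
`1 / (2𝔧ε)` steps, during which the discount factors stay above `1 / 2`; hence
`S ≳ ε ^ (-(k + 1))` and the constant part is also `O(ε ^ β S)`.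
-/

open Finset

namespace Real

lemma add_rpow_le_two_rpow_mul_add_rpow {a b p : ℝ} (ha : 0 ≤ a) (hb : 0 ≤ b) (hp : 0 ≤ p) :
    (a + b) ^ p ≤ 2 ^ p * (a ^ p + b ^ p) := by
  have hmax : (max a b) ^ p ≤ a ^ p + b ^ p := by
    rcases max_cases a b with ⟨h, -⟩ | ⟨h, -⟩ <;> rw [h]
    · linarith [rpow_nonneg hb p]
    · linarith [rpow_nonneg ha p]
  calc (a + b) ^ p ≤ (2 * max a b) ^ p :=
        rpow_le_rpow (by positivity) (by linarith [le_max_left a b, le_max_right a b]) hp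
    _ = 2 ^ p * (max a b) ^ p := mul_rpow zero_le_two (le_max_of_le_left ha)
    _ ≤ 2 ^ p * (a ^ p + b ^ p) := by gcongr

lemma rpow_le_one_add_rpow {v a b : ℝ} (hv : 0 ≤ v) (ha : 0 ≤ a) (hab : a ≤ b) :
    v ^ a ≤ 1 + v ^ b := by
  rcases le_total v 1 with h | h
  · linarith [rpow_le_one hv h ha, rpow_nonneg hv b]
  · linarith [rpow_le_rpow_of_exponent_le h hab]

lemma rpow_sub_le_mul_rpow_add_rpow {u ε β k : ℝ} (hu : 0 ≤ u) (hε : 0 < ε) (hβ : 0 ≤ β)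
    (hβk : β ≤ k) : u ^ (k - β) ≤ ε ^ β * u ^ k + ε ^ (β - k) := by
  have hεu :=
    rpow_le_one_add_rpow (mul_nonneg hε.le hu) (sub_nonneg.2 hβk) (by linarith : k - β ≤ k)
  calc u ^ (k - β) = ε ^ (β - k) * (ε * u) ^ (k - β) := by
        rw [mul_rpow hε.le hu, ← mul_assoc, ← rpow_add hε, show β - k + (k - β) = 0 by ring,
          rpow_zero, one_mul]
    _ ≤ ε ^ (β - k) * (1 + (ε * u) ^ k) := by gcongr
    _ = ε ^ β * u ^ k + ε ^ (β - k) := by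
        rw [mul_rpow hε.le hu, mul_add, mul_one, ← mul_assoc, ← rpow_add hε, sub_add_cancel]
        ring

lemma summable_rpow_mul_geometric {α k : ℝ} (hα0 : 0 ≤ α) (hα1 : α < 1) (hk : 0 ≤ k) :
    Summable fun t : ℕ => (t : ℝ) ^ k * α ^ t := by
  have hα : ‖α‖ < 1 := by rwa [norm_of_nonneg hα0]
  have hmajorant : Summable fun t : ℕ => α ^ t + (t : ℝ) ^ ⌈k⌉₊ * α ^ t :=
    (summable_geometric_of_lt_one hα0 hα1).add (summable_pow_mul_geometric_of_norm_lt_one _ hα)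
  refine hmajorant.of_nonneg_of_le (fun t => by positivity) fun t => ?_
  have h := rpow_le_one_add_rpow (Nat.cast_nonneg t) hk (Nat.le_ceil k)
  rw [rpow_natCast] at h
  nlinarith [pow_nonneg hα0 t]

end Real

open Real

section Trajectory

variable {E : Type*} [SeminormedAddCommGroup E] {xs : ℕ → E} {J : ℝ}

lemma norm_sub_le_mul_of_norm_step_le (hxs : ∀ t, ‖xs (t + 1) - xs t‖ ≤ J) (t : ℕ) :
    ‖xs t - xs 0‖ ≤ t * J := by
  calc ‖xs t - xs 0‖ = dist (xs 0) (xs t) := by rw [dist_comm, dist_eq_norm]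
    _ ≤ ∑ i ∈ range t, dist (xs i) (xs (i + 1)) := dist_le_range_sum_dist xs t
    _ ≤ ∑ _i ∈ range t, J := sum_le_sum fun i _ => by rw [dist_comm, dist_eq_norm]; exact hxs i
    _ = t * J := by simp

lemma summable_geometric_mul_norm_rpow {α k : ℝ} (hα0 : 0 ≤ α) (hα1 : α < 1) (hk : 0 ≤ k)
    (hxs : ∀ t, ‖xs (t + 1) - xs t‖ ≤ J) :
    Summable fun t : ℕ => α ^ t * ‖xs t‖ ^ k := by
  have hJ : 0 ≤ J := (norm_nonneg _).trans (hxs 0)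
  have hmajorant : Summable fun t : ℕ =>
      2 ^ k * ‖xs 0‖ ^ k * α ^ t + 2 ^ k * J ^ k * ((t : ℝ) ^ k * α ^ t) :=
    ((summable_geometric_of_lt_one hα0 hα1).mul_left _).add
      ((summable_rpow_mul_geometric hα0 hα1 hk).mul_left _)
  refine hmajorant.of_nonneg_of_le (fun t => by positivity) fun t => ?_
  have hnorm : ‖xs t‖ ≤ ‖xs 0‖ + t * J := by
    linarith [norm_le_norm_add_norm_sub' (xs t) (xs 0), norm_sub_le_mul_of_norm_step_le hxs t]
  have hpow : ‖xs t‖ ^ k ≤ 2 ^ k * (‖xs 0‖ ^ k + (t : ℝ) ^ k * J ^ k) := by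
    calc ‖xs t‖ ^ k ≤ (‖xs 0‖ + t * J) ^ k := rpow_le_rpow (norm_nonneg _) hnorm hk
      _ ≤ 2 ^ k * (‖xs 0‖ ^ k + (t * J) ^ k) :=
          add_rpow_le_two_rpow_mul_add_rpow (norm_nonneg _) (by positivity) hk
      _ = 2 ^ k * (‖xs 0‖ ^ k + (t : ℝ) ^ k * J ^ k) := by rw [mul_rpow (by positivity) hJ]
  calc α ^ t * ‖xs t‖ ^ k ≤ α ^ t * (2 ^ k * (‖xs 0‖ ^ k + (t : ℝ) ^ k * J ^ k)) := by gcongr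
    _ = _ := by ring

lemma rpow_neg_succ_le_tsum_geometric_mul_norm_rpow {α k : ℝ} (hα0 : 0 ≤ α) (hα1 : α < 1)
    (hk : 0 ≤ k) (hJ : 1 ≤ J) (hxs : ∀ t, ‖xs (t + 1) - xs t‖ ≤ J)
    (hx0 : 1 / (1 - α) ≤ ‖xs 0‖) :
    (1 - α) ^ (-(k + 1)) ≤ 2 ^ (k + 2) * J * ∑' t, α ^ t * ‖xs t‖ ^ k := by
  set ε := 1 - α
  have hε0 : 0 < ε := by linarith
  have hJ0 : 0 < J := by linarith
  set N := ⌊1 / (2 * J * ε)⌋₊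
  have hN : (N : ℝ) * J ≤ 1 / (2 * ε) := by
    calc (N : ℝ) * J ≤ 1 / (2 * J * ε) * J := by gcongr; exact Nat.floor_le (by positivity)
      _ = 1 / (2 * ε) := by field_simp
  have hfar : ∀ t ≤ N, 1 / (2 * ε) ≤ ‖xs t‖ := fun t ht => by
    have htN : (t : ℝ) * J ≤ N * J := by gcongr
    have hhalf : 1 / ε = 1 / (2 * ε) + 1 / (2 * ε) := by field_simp; ring
    linarith [norm_le_norm_add_norm_sub' (xs 0) (xs t), norm_sub_rev (xs 0) (xs t),
      norm_sub_le_mul_of_norm_step_le hxs t]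
  -- By Bernoulli's inequality the discount factors stay above `1 / 2` up to time `N`.
  have hαN : 1 / 2 ≤ α ^ N := by
    have hbern := one_add_mul_le_pow (a := -ε) (by linarith) N
    have hNε : (N : ℝ) * ε ≤ 1 / 2 := by
      have h := (le_div_iff₀ (by positivity : (0 : ℝ) < 2 * ε)).1 hN
      nlinarith [mul_nonneg (Nat.cast_nonneg N : (0 : ℝ) ≤ N) hε0.le]
    rw [show 1 + -ε = α by ring] at hbern
    linarith
  have hpartial : ((N : ℝ) + 1) * (1 / 2 * (1 / (2 * ε)) ^ k) ≤
      ∑ t ∈ range (N + 1), α ^ t * ‖xs t‖ ^ k := by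
    have hterm : ∀ t ∈ range (N + 1), 1 / 2 * (1 / (2 * ε)) ^ k ≤ α ^ t * ‖xs t‖ ^ k :=
      fun t ht => by
        have htN := Nat.lt_succ_iff.mp (mem_range.mp ht)
        gcongr
        · exact hαN.trans (pow_le_pow_of_le_one hα0 hα1.le htN)
        · exact hfar t htN
    simpa using card_nsmul_le_sum _ _ _ hterm
  have hN1 : 1 / (2 * J * ε) ≤ N + 1 := (Nat.lt_floor_add_one _).le
  have hS := summable_geometric_mul_norm_rpow hα0 hα1 hk hxs
  calc ε ^ (-(k + 1)) = 2 ^ (k + 2) * J * (1 / (2 * J * ε) * (1 / 2 * (1 / (2 * ε)) ^ k)) := by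
        rw [rpow_add two_pos, rpow_two, div_rpow zero_le_one (by positivity), one_rpow,
          mul_rpow zero_le_two hε0.le, neg_add, rpow_add hε0, rpow_neg hε0.le, rpow_neg_one]
        field_simp
    _ ≤ 2 ^ (k + 2) * J * ((N + 1) * (1 / 2 * (1 / (2 * ε)) ^ k)) := by gcongr
    _ ≤ 2 ^ (k + 2) * J * ∑' t, α ^ t * ‖xs t‖ ^ k := by
        gcongr
        exact hpartial.trans (hS.sum_le_tsum _ fun t _ => by positivity)

end Trajectory

lemma tsum_geometric_mul_le_of_le_mul_add {α a b : ℝ} {f g : ℕ → ℝ} (hα0 : 0 ≤ α) (hα1 : α < 1)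
    (hf : ∀ t, 0 ≤ f t) (hfg : ∀ t, f t ≤ a * g t + b) (hg : Summable fun t => α ^ t * g t) :
    ∑' t, α ^ t * f t ≤ a * ∑' t, α ^ t * g t + b / (1 - α) := by
  have hgeom := summable_geometric_of_lt_one hα0 hα1
  have hmajorant : Summable fun t => a * (α ^ t * g t) + b * α ^ t :=
    (hg.mul_left a).add (hgeom.mul_left b)
  have hle : ∀ t, α ^ t * f t ≤ a * (α ^ t * g t) + b * α ^ t := fun t => by
    nlinarith [mul_le_mul_of_nonneg_left (hfg t) (pow_nonneg hα0 t)]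
  calc ∑' t, α ^ t * f t ≤ ∑' t, (a * (α ^ t * g t) + b * α ^ t) :=
        (hmajorant.of_nonneg_of_le (fun t => mul_nonneg (pow_nonneg hα0 t) (hf t)) hle).tsum_le_tsum
          hle hmajorant
    _ = a * ∑' t, α ^ t * g t + b / (1 - α) := by
        rw [(hg.mul_left a).tsum_add (hgeom.mul_left b), tsum_mul_left, tsum_mul_left,
          tsum_geometric_of_lt_one hα0 hα1, div_eq_mul_inv]

lemma tayloring_error_envelope_le {ε β k m r : ℝ} (hε0 : 0 < ε) (hε1 : ε ≤ 1) (hβ : 0 ≤ β)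
    (hβk : β ≤ k) (hm : m ≤ k + 2) (hr : 0 ≤ r) :
    (1 + r) ^ (k - β) + ε ^ (-(m * (k - β) / (k + 2))) + ε ^ (-((k - β) / 2)) ≤
      2 ^ k * ε ^ β * r ^ k + (2 ^ k + 3) * ε ^ (β - k) := by
  have hk : 0 ≤ k := hβ.trans hβk
  have hmid : ε ^ (-(m * (k - β) / (k + 2))) ≤ ε ^ (β - k) := by
    refine rpow_le_rpow_of_exponent_ge hε0 hε1 ?_
    rw [le_neg, neg_sub, div_le_iff₀ (by linarith)]
    nlinarith
  have hlast : ε ^ (-((k - β) / 2)) ≤ ε ^ (β - k) :=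
    rpow_le_rpow_of_exponent_ge hε0 hε1 (by linarith)
  have hβ_le : ε ^ β ≤ ε ^ (β - k) := rpow_le_rpow_of_exponent_ge hε0 hε1 (by linarith)
  have hfirst : (1 + r) ^ (k - β) ≤ 2 ^ k * ε ^ β * r ^ k + (2 ^ k + 1) * ε ^ (β - k) := by
    have hsplit := add_rpow_le_two_rpow_mul_add_rpow zero_le_one hr hk
    rw [one_rpow] at hsplit
    calc (1 + r) ^ (k - β) ≤ ε ^ β * (1 + r) ^ k + ε ^ (β - k) :=
          rpow_sub_le_mul_rpow_add_rpow (by positivity) hε0 hβ hβk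
      _ ≤ ε ^ β * (2 ^ k * (1 + r ^ k)) + ε ^ (β - k) := by gcongr
      _ ≤ 2 ^ k * ε ^ β * r ^ k + (2 ^ k + 1) * ε ^ (β - k) := by
          nlinarith [mul_le_mul_of_nonneg_left hβ_le (by positivity : (0 : ℝ) ≤ 2 ^ k)]
  linarith

theorem vanishing_discount_optimality_pathwise_general
    (d : ℕ) (β k m jmp Γ₀ : ℝ)
    (hβ0 : 0 < β) (hk : max 1 β ≤ k)
    (hm2 : m ≤ k + 1)
    (hjmp : 1 ≤ jmp) (hΓ₀ : 0 < Γ₀) :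
    ∃ Γ : ℝ, 0 < Γ ∧
      ∀ α : ℝ, 1 / 2 ≤ α → α < 1 →
      ∀ x : EuclideanSpace ℝ (Fin d), 1 / (1 - α) ≤ ‖x‖ →
      ∀ xs : ℕ → EuclideanSpace ℝ (Fin d), xs 0 = x →
      (∀ t : ℕ, ‖xs (t + 1) - xs t‖ ≤ jmp) →
      ∀ H : EuclideanSpace ℝ (Fin d) → ℝ,
      (∀ y, 0 ≤ H y ∧ H y ≤ Γ₀ * ((1 + ‖y‖) ^ (k - β) +
          (1 - α) ^ (-(m * (k - β) / (k + 2))) + (1 - α) ^ (-((k - β) / 2)))) →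
      (∑' t : ℕ, α ^ t * H (xs t)) ≤
        Γ * (1 - α) ^ β * ∑' t : ℕ, α ^ t * ‖xs t‖ ^ k := by
  have hβk : β ≤ k := (le_max_right 1 β).trans hk
  refine ⟨Γ₀ * (2 ^ k + (2 ^ k + 3) * (2 ^ (k + 2) * jmp)), by positivity, ?_⟩
  intro α hα2 hα1 x hx xs hxs0 hstep H hH
  have hα0 : 0 ≤ α := by linarith
  have hε0 : 0 < 1 - α := by linarith
  have hε1 : 1 - α ≤ 1 := by linarith
  have hS := summable_geometric_mul_norm_rpow hα0 hα1 (hβ0.le.trans hβk) hstep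
  have hfar := rpow_neg_succ_le_tsum_geometric_mul_norm_rpow hα0 hα1 (hβ0.le.trans hβk) hjmp
    hstep (hxs0 ▸ hx)
  have hHle : ∀ t, H (xs t) ≤ Γ₀ * 2 ^ k * (1 - α) ^ β * ‖xs t‖ ^ k +
      Γ₀ * (2 ^ k + 3) * (1 - α) ^ (β - k) := fun t => by
    have henv := mul_le_mul_of_nonneg_left (tayloring_error_envelope_le hε0 hε1 hβ0.le hβk
      (by linarith : m ≤ k + 2) (norm_nonneg (xs t))) hΓ₀.le
    linarith [(hH (xs t)).2]
  set S := ∑' t : ℕ, α ^ t * ‖xs t‖ ^ k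
  calc (∑' t : ℕ, α ^ t * H (xs t))
      ≤ Γ₀ * 2 ^ k * (1 - α) ^ β * S + Γ₀ * (2 ^ k + 3) * (1 - α) ^ (β - k) / (1 - α) :=
        tsum_geometric_mul_le_of_le_mul_add hα0 hα1 (fun t => (hH (xs t)).1) hHle hS
    _ = Γ₀ * 2 ^ k * (1 - α) ^ β * S + Γ₀ * (2 ^ k + 3) * (1 - α) ^ β * (1 - α) ^ (-(k + 1)) := by
        rw [mul_div_assoc, ← rpow_sub_one hε0.ne', show β - k - 1 = β + -(k + 1) by ring,
          rpow_add hε0]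
        ring
    _ ≤ Γ₀ * 2 ^ k * (1 - α) ^ β * S +
          Γ₀ * (2 ^ k + 3) * (1 - α) ^ β * (2 ^ (k + 2) * jmp * S) := by gcongr
    _ = Γ₀ * (2 ^ k + (2 ^ k + 3) * (2 ^ (k + 2) * jmp)) * (1 - α) ^ β * S := by ring

theorem vanishing_discount_optimality_pathwise
    (d : ℕ) (hd : 1 ≤ d) (β k m jmp Γ₀ : ℝ)
    (hβ0 : 0 < β) (hβ1 : β ≤ 1) (hk : max 1 β ≤ k)
    (hm1 : 1 ≤ m) (hm2 : m ≤ k + 1)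
    (hjmp : 1 ≤ jmp) (hΓ₀ : 0 < Γ₀) :
    ∃ Γ : ℝ, 0 < Γ ∧
      ∀ α : ℝ, 1 / 2 ≤ α → α < 1 →
      ∀ x : EuclideanSpace ℝ (Fin d), 1 / (1 - α) ≤ ‖x‖ →
      ∀ xs : ℕ → EuclideanSpace ℝ (Fin d), xs 0 = x →
      (∀ t : ℕ, ‖xs (t + 1) - xs t‖ ≤ jmp) →
      ∀ H : EuclideanSpace ℝ (Fin d) → ℝ,
      (∀ y, 0 ≤ H y ∧ H y ≤ Γ₀ * ((1 + ‖y‖) ^ (k - β) +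
          (1 - α) ^ (-(m * (k - β) / (k + 2))) + (1 - α) ^ (-((k - β) / 2)))) →
      (∑' t : ℕ, α ^ t * H (xs t)) ≤
        Γ * (1 - α) ^ β * ∑' t : ℕ, α ^ t * ‖xs t‖ ^ k :=
  vanishing_discount_optimality_pathwise_general d β k m jmp Γ₀ hβ0 hk hm2 hjmp hΓ₀
end
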